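/- (Planning loss bound.) Let M and M̂ be two finite MDPs sharing the same state space S and action space A. Let γ, γ_Bw be discount factors with 0 ≤ γ ≤ γ_Bw < 1. Let π*_{Bw} be an optimal policy for M at discount γ_Bw, π*_γ an optimal policy for M at discount γ, and π̂ an optimal policy for M̂ at discount γ. Let ε̂ = ||V_{M,γ}^{π*_γ} − V_{M,γ}^{π̂}||_∞, let δ = δ_M(π*_γ, π*_{Bw}) and δ̂ = δ_M(π*_γ, π̂) be discordant action variations computed with the transitions of M, and let κ = κ_γ be the value-function variation of M at discount γ. Then the planning loss satisfies ||V_{M,γ_Bw}^{π*_{Bw}} − V_{M,γ_Bw}^{π̂}||_∞ ≤ κ · ((γ_Bw − γ)/(1 − γ_Bw)) · ( (δ/2)/(1 − γ_Bw(1 − δ/2)) + (δ̂/2)/(1 − γ_Bw(1 − δ̂/2)) ) + ε̂ · (1 − γ)/(1 − γ_Bw). -/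

import Mathlib

open Finset

noncomputable section

/-- Transition matrix of a policy `π` in an MDP with transition function `P`. -/
def polMatrix {S A : Type*} [Fintype S] [DecidableEq S] (P : S → A → S → ℝ) (π : S → A) :
    Matrix S S ℝ :=
  fun s s' => P s (π s) s'

/-- Reward vector of a policy `π` for a reward function `R`. -/
def polReward {S A : Type*} (R : S → A → ℝ) (π : S → A) : S → ℝ :=
  fun s => R s (π s)

/-- Value vector of a policy: `V_γ^π = Σ_{k=0}^∞ γ^k P_π^k R_π`. -/
def valueVec {S A : Type*} [Fintype S] [DecidableEq S] (P : S → A → S → ℝ) (R : S → A → ℝ)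
    (γ : ℝ) (π : S → A) : S → ℝ :=
  ∑' k : ℕ, γ ^ k • ((polMatrix P π ^ k).mulVec (polReward R π))

/-- A policy `π⋆` is optimal for discount `γ` if it dominates every policy in every state. -/
def IsOptimalPolicy {S A : Type*} [Fintype S] [DecidableEq S] (P : S → A → S → ℝ)
    (R : S → A → ℝ) (γ : ℝ) (πstar : S → A) : Prop :=
  ∀ (π : S → A) (s : S), valueVec P R γ π s ≤ valueVec P R γ πstar s

/-- Discordant action variation of two policies:
`max_{s : π s ≠ π' s} ‖P(·|s, π s) − P(·|s, π' s)‖₁`, taken to be `0` when `π = π'`. -/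
def discordantVar {S A : Type*} [Fintype S] [DecidableEq S] [DecidableEq A]
    (P : S → A → S → ℝ) (π π' : S → A) : ℝ :=
  Finset.fold max 0 (fun s => ∑ s', |P s (π s) s' - P s (π' s) s'|)
    (Finset.univ.filter fun s => π s ≠ π' s)

/-- Value-function variation of a policy: `max_{s,s'} |V(s) − V(s')|`. -/
def valueVariation {S : Type*} [Fintype S] [Nonempty S] (V : S → ℝ) : ℝ :=
  (Finset.univ : Finset (S × S)).sup' Finset.univ_nonempty (fun pr => |V pr.1 - V pr.2|)

/-- Sup norm of a vector on a nonempty finite set. -/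
def supNorm {S : Type*} [Fintype S] [Nonempty S] (x : S → ℝ) : ℝ :=
  Finset.univ.sup' Finset.univ_nonempty (fun s => |x s|)

/-!
Write `V^π_γ` for the value of `π` at discount `γ` and `D^π_r u = ∑ₖ rᵏ P_πᵏ u`. The resolvent
identity gives `V^π_{γBw} = V^π_γ + (γBw - γ) D^π_{γBw} P_π V^π_γ`. Subtracting it for `π⋆Bw` and
`π̂`, the `γ`-parts differ by at most `ε̂` since `V^{π⋆Bw}_γ ≤ V^{π⋆γ}_γ`. In the `γBw`-parts,
`V^{π⋆Bw}_γ` may be raised, and `V^{π̂}_γ` replaced at cost `ε̂ / (1 - γBw)`, to `V^{π⋆γ}_γ`; each of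
the two resulting terms is then compared with `D^{π⋆γ}_{γBw} P_{π⋆γ} V^{π⋆γ}_γ`. Rows of two policies
at `ℓ¹`-distance at most `δ` can be coupled to agree at every step with probability `≥ 1 - δ/2`, so
`|(P_π^t - P_{π⋆γ}^t) V| ≤ κ (1 - (1 - δ/2)^t)`; summing against `γBwᵗ` gives
`κ / (1 - γBw) · (δ/2) / (1 - γBw (1 - δ/2))`.
-/

open Matrix

section Stochastic

variable {S : Type*} [Fintype S]

theorem dotProduct_mem_Icc_of_nonneg {w f : S → ℝ} {lo hi : ℝ} (hw : ∀ x, 0 ≤ w x)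
    (hf : ∀ x, f x ∈ Set.Icc lo hi) :
    w ⬝ᵥ f ∈ Set.Icc ((∑ x, w x) * lo) ((∑ x, w x) * hi) := by
  simp only [dotProduct, Finset.sum_mul, Set.mem_Icc]
  exact ⟨Finset.sum_le_sum fun x _ => mul_le_mul_of_nonneg_left (hf x).1 (hw x),
    Finset.sum_le_sum fun x _ => mul_le_mul_of_nonneg_left (hf x).2 (hw x)⟩

theorem abs_dotProduct_sub_le_of_sum_eq {a b f g : S → ℝ} {lo hi : ℝ}
    (ha : ∀ x, 0 ≤ a x) (hb : ∀ x, 0 ≤ b x) (hab : ∑ x, a x = ∑ x, b x)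
    (hf : ∀ x, f x ∈ Set.Icc lo hi) (hg : ∀ x, g x ∈ Set.Icc lo hi) :
    |a ⬝ᵥ f - b ⬝ᵥ g| ≤ (∑ x, a x) * (hi - lo) := by
  have haf := dotProduct_mem_Icc_of_nonneg ha hf
  have hbg := dotProduct_mem_Icc_of_nonneg hb hg
  rw [← hab] at hbg
  rw [abs_le]
  constructor <;> nlinarith [haf.1, haf.2, hbg.1, hbg.2]

/-- Coupling bound: the two rows share the mass `p ⊓ q`, on which `f` and `g` differ by at most
`c`; the remaining mass `½‖p - q‖₁ ≤ β` can move the value by at most `κ`. -/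
theorem abs_dotProduct_sub_le_of_coupling {p q f g : S → ℝ} {β c κ lo hi : ℝ}
    (hp : p ∈ stdSimplex ℝ S) (hq : q ∈ stdSimplex ℝ S) (hpq : ∑ x, |p x - q x| ≤ 2 * β)
    (hf : ∀ x, f x ∈ Set.Icc lo hi) (hg : ∀ x, g x ∈ Set.Icc lo hi) (hfg : ∀ x, |f x - g x| ≤ c)
    (hc : c ≤ κ) (hκ : hi - lo ≤ κ) :
    |p ⬝ᵥ f - q ⬝ᵥ g| ≤ (1 - β) * c + β * κ := by
  set m := p ⊓ q
  have hm : ∀ x, 0 ≤ m x := fun x => le_inf (hp.1 x) (hq.1 x)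
  have hpm : ∀ x, 0 ≤ (p - m) x := fun x => sub_nonneg.2 inf_le_left
  have hqm : ∀ x, 0 ≤ (q - m) x := fun x => sub_nonneg.2 inf_le_right
  have hsum_p : ∑ x, (p - m) x = 1 - ∑ x, m x := by
    simp only [Pi.sub_apply, Finset.sum_sub_distrib, hp.2]
  have hsum_q : ∑ x, (q - m) x = 1 - ∑ x, m x := by
    simp only [Pi.sub_apply, Finset.sum_sub_distrib, hq.2]
  have htv : ∑ x, |p x - q x| = 2 * (1 - ∑ x, m x) := by
    have : ∀ x, |p x - q x| = (p - m) x + (q - m) x := fun x => by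
      simp only [m, Pi.sub_apply, Pi.inf_apply]
      rcases le_total (p x) (q x) with h | h
      · rw [inf_eq_left.2 h, abs_of_nonpos (by linarith)]; ring
      · rw [inf_eq_right.2 h, abs_of_nonneg (by linarith)]; ring
    rw [Finset.sum_congr rfl fun x _ => this x, Finset.sum_add_distrib, hsum_p, hsum_q]
    ring
  have hshared : |m ⬝ᵥ (f - g)| ≤ (∑ x, m x) * c := by
    have := dotProduct_mem_Icc_of_nonneg (f := f - g) hm (fun x => abs_le.1 (hfg x))
    exact abs_le.2 ⟨by linarith [this.1], this.2⟩
  have hrest := abs_dotProduct_sub_le_of_sum_eq hpm hqm (hsum_p.trans hsum_q.symm) hf hg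
  have hsplit : p ⬝ᵥ f - q ⬝ᵥ g = m ⬝ᵥ (f - g) + ((p - m) ⬝ᵥ f - (q - m) ⬝ᵥ g) := by
    simp only [dotProduct_sub, sub_dotProduct]; ring
  have hm1 : ∑ x, m x ≤ 1 := sub_nonneg.1 (hsum_p ▸ Finset.sum_nonneg fun x _ => hpm x)
  have hβm : 1 - ∑ x, m x ≤ β := by linarith
  rw [hsum_p] at hrest
  rw [hsplit]
  calc _ ≤ |m ⬝ᵥ (f - g)| + |(p - m) ⬝ᵥ f - (q - m) ⬝ᵥ g| := abs_add_le _ _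
    _ ≤ (∑ x, m x) * c + (1 - ∑ x, m x) * κ := by
        gcongr
        exact hrest.trans (mul_le_mul_of_nonneg_left hκ (by linarith))
    _ ≤ (1 - β) * c + β * κ := by nlinarith [mul_nonneg (sub_nonneg.2 hβm) (sub_nonneg.2 hc)]

theorem sum_abs_sub_le_two_of_mem_stdSimplex {p q : S → ℝ} (hp : p ∈ stdSimplex ℝ S)
    (hq : q ∈ stdSimplex ℝ S) : ∑ x, |p x - q x| ≤ 2 := by
  calc ∑ x, |p x - q x| ≤ ∑ x, (p x + q x) :=
        Finset.sum_le_sum fun x _ => (abs_sub _ _).trans <| by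
          rw [abs_of_nonneg (hp.1 x), abs_of_nonneg (hq.1 x)]
    _ = 2 := by rw [Finset.sum_add_distrib, hp.2, hq.2]; norm_num

theorem abs_sub_apply_le_of_norm_sub_le {f g : S → ℝ} {b : ℝ}
    (h : ‖f - g‖ ≤ b) (s : S) : |f s - g s| ≤ b :=
  (norm_le_pi_norm (f - g) s).trans h

variable [DecidableEq S] {M M' : Matrix S S ℝ}

theorem row_mem_stdSimplex_of_mem_rowStochastic (hM : M ∈ rowStochastic ℝ S) (s : S) :
    M s ∈ stdSimplex ℝ S :=
  ⟨fun _ => hM.1 _ _, sum_row_of_mem_rowStochastic hM s⟩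

theorem mulVec_mem_Icc_of_mem_rowStochastic (hM : M ∈ rowStochastic ℝ S) {v : S → ℝ} {lo hi : ℝ}
    (hv : ∀ x, v x ∈ Set.Icc lo hi) (s : S) : (M *ᵥ v) s ∈ Set.Icc lo hi := by
  show M s ⬝ᵥ v ∈ _
  simpa [sum_row_of_mem_rowStochastic hM s] using
    dotProduct_mem_Icc_of_nonneg (fun x => hM.1 s x) hv

theorem norm_mulVec_le_of_mem_rowStochastic (hM : M ∈ rowStochastic ℝ S) (v : S → ℝ) :
    ‖M *ᵥ v‖ ≤ ‖v‖ :=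
  (pi_norm_le_iff_of_nonneg (norm_nonneg v)).2 fun s => abs_le.2 <|
    mulVec_mem_Icc_of_mem_rowStochastic hM (fun x => abs_le.1 (norm_le_pi_norm v x)) s

theorem mulVec_mono_of_mem_rowStochastic (hM : M ∈ rowStochastic ℝ S) {v w : S → ℝ}
    (hvw : v ≤ w) : M *ᵥ v ≤ M *ᵥ w := fun s =>
  Finset.sum_le_sum fun x _ => mul_le_mul_of_nonneg_left (hvw x) (hM.1 s x)

end Stochastic

section DiscountedSum

variable {S : Type*} [Fintype S] [DecidableEq S] {M : Matrix S S ℝ} {r : ℝ}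

/-- `valueVec P R γ π` is by definition `discountedSum (polMatrix P π) γ (polReward R π)`. -/
def discountedSum (M : Matrix S S ℝ) (r : ℝ) (v : S → ℝ) : S → ℝ :=
  ∑' k : ℕ, r ^ k • (M ^ k *ᵥ v)

theorem norm_pow_smul_pow_mulVec_le (hM : M ∈ rowStochastic ℝ S) (hr0 : 0 ≤ r) (v : S → ℝ)
    (k : ℕ) :
    ‖r ^ k • (M ^ k *ᵥ v)‖ ≤ r ^ k * ‖v‖ := by
  rw [norm_smul, Real.norm_of_nonneg (pow_nonneg hr0 k)]
  exact mul_le_mul_of_nonneg_left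
    (norm_mulVec_le_of_mem_rowStochastic (pow_mem hM k) v) (pow_nonneg hr0 k)

theorem summable_pow_smul_pow_mulVec (hM : M ∈ rowStochastic ℝ S) (hr0 : 0 ≤ r) (hr1 : r < 1)
    (v : S → ℝ) :
    Summable fun k : ℕ => r ^ k • (M ^ k *ᵥ v) :=
  ((summable_geometric_of_lt_one hr0 hr1).mul_right ‖v‖).of_norm_bounded
    (norm_pow_smul_pow_mulVec_le hM hr0 v)

theorem norm_discountedSum_le (hM : M ∈ rowStochastic ℝ S) (hr0 : 0 ≤ r) (hr1 : r < 1)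
    (v : S → ℝ) : ‖discountedSum M r v‖ ≤ ‖v‖ / (1 - r) := by
  refine tsum_of_norm_bounded ?_ (norm_pow_smul_pow_mulVec_le hM hr0 v)
  simpa [div_eq_inv_mul] using (hasSum_geometric_of_lt_one hr0 hr1).mul_right ‖v‖

theorem discountedSum_sub (hM : M ∈ rowStochastic ℝ S) (hr0 : 0 ≤ r) (hr1 : r < 1)
    (v w : S → ℝ) :
    discountedSum M r (v - w) = discountedSum M r v - discountedSum M r w := by
  rw [discountedSum, discountedSum, discountedSum, ← Summable.tsum_sub
    (summable_pow_smul_pow_mulVec hM hr0 hr1 v) (summable_pow_smul_pow_mulVec hM hr0 hr1 w)]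
  simp only [mulVec_sub, smul_sub]

theorem discountedSum_mono (hM : M ∈ rowStochastic ℝ S) (hr0 : 0 ≤ r) (hr1 : r < 1)
    {v w : S → ℝ} (hvw : v ≤ w) :
    discountedSum M r v ≤ discountedSum M r w :=
  Summable.tsum_le_tsum
    (fun k => smul_le_smul_of_nonneg_left
      (mulVec_mono_of_mem_rowStochastic (pow_mem hM k) hvw) (pow_nonneg hr0 k))
    (summable_pow_smul_pow_mulVec hM hr0 hr1 v) (summable_pow_smul_pow_mulVec hM hr0 hr1 w)

theorem discountedSum_eq_add_smul_mulVec (hM : M ∈ rowStochastic ℝ S) (hr0 : 0 ≤ r)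
    (hr1 : r < 1) (v : S → ℝ) :
    discountedSum M r v = v + r • M *ᵥ discountedSum M r v := by
  have hsum := summable_pow_smul_pow_mulVec hM hr0 hr1 v
  let L : (S → ℝ) →L[ℝ] S → ℝ := LinearMap.toContinuousLinearMap (r • M.mulVecLin)
  have hL : ∀ u, L u = r • M *ᵥ u := fun _ => rfl
  rw [discountedSum, ← hL, L.map_tsum hsum, hsum.tsum_eq_zero_add]
  congr 1
  · simp
  · refine tsum_congr fun k => ?_
    rw [hL, mulVec_smul, mulVec_mulVec, ← pow_succ', smul_smul, ← pow_succ']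

theorem eq_discountedSum_of_eq_add_smul_mulVec (hM : M ∈ rowStochastic ℝ S) (hr0 : 0 ≤ r)
    (hr1 : r < 1) {v X : S → ℝ} (hX : X = v + r • M *ᵥ X) :
    X = discountedSum M r v := by
  set u := X - discountedSum M r v
  have hu : u = r • M *ᵥ u := by
    have hD := discountedSum_eq_add_smul_mulVec hM hr0 hr1 v
    simp only [u, mulVec_sub, smul_sub]
    linear_combination (norm := module) hX - hD
  have hle : ‖u‖ ≤ r * ‖u‖ := by
    conv_lhs => rw [hu]
    rw [norm_smul, Real.norm_of_nonneg hr0]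
    exact mul_le_mul_of_nonneg_left (norm_mulVec_le_of_mem_rowStochastic hM u) hr0
  have : ‖u‖ = 0 := le_antisymm (by nlinarith [norm_nonneg u]) (norm_nonneg u)
  exact sub_eq_zero.1 (norm_eq_zero.1 this)

theorem norm_discountedSum_mulVec_sub_discountedSum_mulVec_le (hM : M ∈ rowStochastic ℝ S)
    (hr0 : 0 ≤ r) (hr1 : r < 1) (v w : S → ℝ) :
    ‖discountedSum M r (M *ᵥ v) - discountedSum M r (M *ᵥ w)‖ ≤ ‖v - w‖ / (1 - r) := by
  rw [← discountedSum_sub hM hr0 hr1, ← mulVec_sub]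
  refine (norm_discountedSum_le hM hr0 hr1 _).trans ?_
  gcongr
  exact norm_mulVec_le_of_mem_rowStochastic hM _

/-- The resolvent identity `(1 - γ'M)⁻¹ = (1 - γM)⁻¹ + (γ' - γ)(1 - γ'M)⁻¹ M (1 - γM)⁻¹`, proved by
checking that the right-hand side solves the Bellman equation `X = v + γ' M X`. -/
theorem discountedSum_eq_add_smul_discountedSum (hM : M ∈ rowStochastic ℝ S) {γ γ' : ℝ}
    (hγ0 : 0 ≤ γ) (hγ1 : γ < 1) (hγ'0 : 0 ≤ γ') (hγ'1 : γ' < 1) (v : S → ℝ) :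
    discountedSum M γ' v =
      discountedSum M γ v + (γ' - γ) • discountedSum M γ' (M *ᵥ discountedSum M γ v) := by
  symm
  refine eq_discountedSum_of_eq_add_smul_mulVec hM hγ'0 hγ'1 ?_
  have hV := discountedSum_eq_add_smul_mulVec hM hγ0 hγ1 v
  set V := discountedSum M γ v
  have hW := discountedSum_eq_add_smul_mulVec hM hγ'0 hγ'1 (M *ᵥ V)
  set W := discountedSum M γ' (M *ᵥ V)
  rw [mulVec_add, mulVec_smul]
  linear_combination (norm := module) hV + (γ' - γ) • hW

end DiscountedSum

section Coupling

variable {S : Type*} [Fintype S] [DecidableEq S] {M M' : Matrix S S ℝ} {β κ lo hi : ℝ}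
  {V : S → ℝ}

theorem abs_pow_mulVec_sub_pow_mulVec_le (hM : M ∈ rowStochastic ℝ S)
    (hM' : M' ∈ rowStochastic ℝ S) (hβ1 : β ≤ 1) (hrow : ∀ s, ∑ x, |M' s x - M s x| ≤ 2 * β)
    (hV : ∀ x, V x ∈ Set.Icc lo hi) (hκ : hi - lo ≤ κ) (t : ℕ) (s : S) :
    |(M' ^ t *ᵥ V) s - (M ^ t *ᵥ V) s| ≤ κ * (1 - (1 - β) ^ t) := by
  induction t generalizing s with
  | zero => simp
  | succ t ih =>
    have hκ0 : 0 ≤ κ := by linarith [(hV s).1, (hV s).2]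
    have hc : κ * (1 - (1 - β) ^ t) ≤ κ :=
      mul_le_of_le_one_right hκ0 (by linarith [pow_nonneg (sub_nonneg.2 hβ1) t])
    rw [pow_succ', pow_succ', ← mulVec_mulVec, ← mulVec_mulVec]
    calc _ ≤ (1 - β) * (κ * (1 - (1 - β) ^ t)) + β * κ :=
          abs_dotProduct_sub_le_of_coupling (row_mem_stdSimplex_of_mem_rowStochastic hM' s)
            (row_mem_stdSimplex_of_mem_rowStochastic hM s) (hrow s)
            (mulVec_mem_Icc_of_mem_rowStochastic (pow_mem hM' t) hV)
            (mulVec_mem_Icc_of_mem_rowStochastic (pow_mem hM t) hV) ih hc hκ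
      _ = κ * (1 - (1 - β) ^ (t + 1)) := by ring

theorem norm_discountedSum_mulVec_sub_le_of_sum_abs_sub_le [Nonempty S]
    (hM : M ∈ rowStochastic ℝ S) (hM' : M' ∈ rowStochastic ℝ S) {r : ℝ} (hr0 : 0 ≤ r)
    (hr1 : r < 1) (hβ0 : 0 ≤ β) (hβ1 : β ≤ 1) (hrow : ∀ s, ∑ x, |M' s x - M s x| ≤ 2 * β)
    (hV : ∀ x, V x ∈ Set.Icc lo hi) (hκ : hi - lo ≤ κ) :
    ‖discountedSum M' r (M' *ᵥ V) - discountedSum M r (M *ᵥ V)‖ ≤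
      κ / (1 - r) * (β / (1 - r * (1 - β))) := by
  have hq0 : 0 ≤ r * (1 - β) := mul_nonneg hr0 (by linarith)
  have hq1 : r * (1 - β) < 1 := by nlinarith
  rw [discountedSum, discountedSum, ← Summable.tsum_sub
    (summable_pow_smul_pow_mulVec hM' hr0 hr1 _) (summable_pow_smul_pow_mulVec hM hr0 hr1 _)]
  refine tsum_of_norm_bounded (g := fun k => κ * (r ^ k - (1 - β) * (r * (1 - β)) ^ k)) ?_
    fun k => ?_
  · have h1 : 1 - r ≠ 0 := by linarith
    have h2 : 1 - r * (1 - β) ≠ 0 := by linarith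
    rw [show κ / (1 - r) * (β / (1 - r * (1 - β))) =
        κ * ((1 - r)⁻¹ - (1 - β) * (1 - r * (1 - β))⁻¹) by field_simp; ring]
    exact ((hasSum_geometric_of_lt_one hr0 hr1).sub
      ((hasSum_geometric_of_lt_one hq0 hq1).mul_left (1 - β))).mul_left κ
  · have hpow : ‖M' ^ (k + 1) *ᵥ V - M ^ (k + 1) *ᵥ V‖ ≤ κ * (1 - (1 - β) ^ (k + 1)) :=
      (pi_norm_le_iff_of_nonempty _).2
        (abs_pow_mulVec_sub_pow_mulVec_le hM hM' hβ1 hrow hV hκ (k + 1))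
    rw [← smul_sub, norm_smul, Real.norm_of_nonneg (pow_nonneg hr0 k), mulVec_mulVec,
      mulVec_mulVec, ← pow_succ, ← pow_succ]
    calc _ ≤ r ^ k * (κ * (1 - (1 - β) ^ (k + 1))) :=
          mul_le_mul_of_nonneg_left hpow (pow_nonneg hr0 k)
      _ = κ * (r ^ k - (1 - β) * (r * (1 - β)) ^ k) := by rw [mul_pow]; ring

end Coupling

section Norms

variable {S : Type*} [Fintype S] [Nonempty S]

theorem supNorm_eq_norm (x : S → ℝ) : supNorm x = ‖x‖ :=
  le_antisymm (Finset.sup'_le _ _ fun s _ => norm_le_pi_norm x s)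
    ((pi_norm_le_iff_of_nonempty x).2 fun s => Finset.le_sup' (fun s => |x s|) (mem_univ s))

theorem exists_mem_Icc_sub_le_valueVariation (V : S → ℝ) :
    ∃ lo hi, (∀ x, V x ∈ Set.Icc lo hi) ∧ hi - lo ≤ valueVariation V := by
  obtain ⟨slo, -, hlo⟩ := Finset.exists_mem_eq_inf' Finset.univ_nonempty V
  obtain ⟨shi, -, hhi⟩ := Finset.exists_mem_eq_sup' Finset.univ_nonempty V
  refine ⟨univ.inf' univ_nonempty V, univ.sup' univ_nonempty V,
    fun x => ⟨Finset.inf'_le V (mem_univ x), Finset.le_sup' V (mem_univ x)⟩, ?_⟩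
  rw [hlo, hhi]
  exact (le_abs_self _).trans
    (Finset.le_sup' (fun pr : S × S => |V pr.1 - V pr.2|) (mem_univ (shi, slo)))

end Norms

section MDP

variable {S A : Type*} [Fintype S] [DecidableEq S] {P : S → A → S → ℝ}

theorem polMatrix_mem_rowStochastic (hP0 : ∀ s a s', 0 ≤ P s a s')
    (hP1 : ∀ s a, ∑ s', P s a s' = 1) (π : S → A) : polMatrix P π ∈ rowStochastic ℝ S :=
  mem_rowStochastic_iff_sum.2 ⟨fun s _ => hP0 s (π s) _, fun s => hP1 s (π s)⟩

theorem valueVec_eq_add_smul_discountedSum (hP0 : ∀ s a s', 0 ≤ P s a s')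
    (hP1 : ∀ s a, ∑ s', P s a s' = 1) (R : S → A → ℝ) {γ γ' : ℝ} (hγ0 : 0 ≤ γ) (hγ1 : γ < 1)
    (hγ'0 : 0 ≤ γ') (hγ'1 : γ' < 1) (π : S → A) :
    valueVec P R γ' π = valueVec P R γ π +
      (γ' - γ) • discountedSum (polMatrix P π) γ' (polMatrix P π *ᵥ valueVec P R γ π) :=
  discountedSum_eq_add_smul_discountedSum (polMatrix_mem_rowStochastic hP0 hP1 π)
    hγ0 hγ1 hγ'0 hγ'1 _

variable [DecidableEq A]

theorem discordantVar_nonneg (P : S → A → S → ℝ) (π π' : S → A) : 0 ≤ discordantVar P π π' :=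
  (Finset.le_fold_max 0).2 (Or.inl le_rfl)

theorem discordantVar_le_two (hP0 : ∀ s a s', 0 ≤ P s a s') (hP1 : ∀ s a, ∑ s', P s a s' = 1)
    (π π' : S → A) : discordantVar P π π' ≤ 2 :=
  (Finset.fold_max_le 2).2 ⟨zero_le_two, fun s _ =>
    sum_abs_sub_le_two_of_mem_stdSimplex ⟨hP0 s (π s), hP1 s (π s)⟩ ⟨hP0 s (π' s), hP1 s (π' s)⟩⟩

theorem sum_abs_polMatrix_sub_le_discordantVar (P : S → A → S → ℝ) (π π' : S → A) (s : S) :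
    ∑ x, |polMatrix P π' s x - polMatrix P π s x| ≤ discordantVar P π π' := by
  by_cases hs : π s = π' s
  · simpa [polMatrix, hs] using discordantVar_nonneg P π π'
  · refine (Finset.le_fold_max _).2 (Or.inr ⟨s, by simpa using hs, le_of_eq ?_⟩)
    exact Finset.sum_congr rfl fun x _ => abs_sub_comm _ _

theorem norm_discountedSum_polMatrix_sub_le [Nonempty S] (hP0 : ∀ s a s', 0 ≤ P s a s')
    (hP1 : ∀ s a, ∑ s', P s a s' = 1) (π π' : S → A) {r : ℝ} (hr0 : 0 ≤ r) (hr1 : r < 1)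
    {V : S → ℝ} {lo hi κ : ℝ} (hV : ∀ x, V x ∈ Set.Icc lo hi) (hκ : hi - lo ≤ κ) :
    ‖discountedSum (polMatrix P π') r (polMatrix P π' *ᵥ V) -
        discountedSum (polMatrix P π) r (polMatrix P π *ᵥ V)‖ ≤
      κ / (1 - r) * ((discordantVar P π π' / 2) / (1 - r * (1 - discordantVar P π π' / 2))) :=
  norm_discountedSum_mulVec_sub_le_of_sum_abs_sub_le (polMatrix_mem_rowStochastic hP0 hP1 π)
    (polMatrix_mem_rowStochastic hP0 hP1 π') hr0 hr1
    (by linarith [discordantVar_nonneg P π π']) (by linarith [discordantVar_le_two hP0 hP1 π π'])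
    (fun s => by linarith [sum_abs_polMatrix_sub_le_discordantVar P π π' s]) hV hκ

theorem discountedSum_polMatrix_sub_le [Nonempty S] (hP0 : ∀ s a s', 0 ≤ P s a s')
    (hP1 : ∀ s a, ∑ s', P s a s' = 1) (πstar π π' : S → A) {r : ℝ} (hr0 : 0 ≤ r) (hr1 : r < 1)
    {u v w : S → ℝ} (huv : u ≤ v) (s : S) :
    discountedSum (polMatrix P π) r (polMatrix P π *ᵥ u) s -
        discountedSum (polMatrix P π') r (polMatrix P π' *ᵥ w) s ≤
      valueVariation v / (1 - r) *
        ((discordantVar P πstar π / 2) / (1 - r * (1 - discordantVar P πstar π / 2))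
          + (discordantVar P πstar π' / 2) / (1 - r * (1 - discordantVar P πstar π' / 2)))
      + ‖v - w‖ / (1 - r) := by
  have hstoch := polMatrix_mem_rowStochastic hP0 hP1
  obtain ⟨lo, hi, hv, hκ⟩ := exists_mem_Icc_sub_le_valueVariation v
  have hu := discountedSum_mono (hstoch π) hr0 hr1
    (mulVec_mono_of_mem_rowStochastic (hstoch π) huv)
  have hπ := norm_discountedSum_polMatrix_sub_le hP0 hP1 πstar π hr0 hr1 hv hκ
  have hπ' := norm_discountedSum_polMatrix_sub_le hP0 hP1 πstar π' hr0 hr1 hv hκ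
  have hw := norm_discountedSum_mulVec_sub_discountedSum_mulVec_le (hstoch π') hr0 hr1 v w
  linarith [hu s, abs_le.1 (abs_sub_apply_le_of_norm_sub_le hπ s),
    abs_le.1 (abs_sub_apply_le_of_norm_sub_le hπ' s),
    abs_le.1 (abs_sub_apply_le_of_norm_sub_le hw s)]

end MDP

theorem planning_loss_bound_general
    {S A : Type*} [Fintype S] [DecidableEq S] [Nonempty S] [DecidableEq A]
    (P : S → A → S → ℝ) (R : S → A → ℝ)
    (hP0 : ∀ s a s', 0 ≤ P s a s') (hP1 : ∀ s a, ∑ s', P s a s' = 1)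
    (γ γBw : ℝ) (hγ0 : 0 ≤ γ) (hγγBw : γ ≤ γBw) (hγBw1 : γBw < 1)
    (πBw πγ πhat : S → A)
    (hπBw : IsOptimalPolicy P R γBw πBw) (hπγ : IsOptimalPolicy P R γ πγ) :
    supNorm (fun s => valueVec P R γBw πBw s - valueVec P R γBw πhat s) ≤
      valueVariation (valueVec P R γ πγ) * ((γBw - γ) / (1 - γBw)) *
        ((discordantVar P πγ πBw / 2) / (1 - γBw * (1 - discordantVar P πγ πBw / 2))
          + (discordantVar P πγ πhat / 2) / (1 - γBw * (1 - discordantVar P πγ πhat / 2)))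
      + supNorm (fun s => valueVec P R γ πγ s - valueVec P R γ πhat s) * (1 - γ) / (1 - γBw) := by
  have hγBw0 : 0 ≤ γBw := hγ0.trans hγγBw
  have hγ1 : γ < 1 := hγγBw.trans_lt hγBw1
  set V := valueVec P R γ
  set ε := supNorm (fun s => V πγ s - V πhat s)
  have hε : ε = ‖V πγ - V πhat‖ := supNorm_eq_norm _
  rw [supNorm_eq_norm, pi_norm_le_iff_of_nonempty]
  intro s
  rw [Real.norm_eq_abs, abs_of_nonneg (sub_nonneg.2 (hπBw πhat s)),
    valueVec_eq_add_smul_discountedSum hP0 hP1 R hγ0 hγ1 hγBw0 hγBw1 πBw,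
    valueVec_eq_add_smul_discountedSum hP0 hP1 R hγ0 hγ1 hγBw0 hγBw1 πhat]
  have hV : V πBw s - V πhat s ≤ ε := by
    linarith [hπγ πBw s, abs_le.1 (abs_sub_apply_le_of_norm_sub_le hε.ge s)]
  have hD := hε ▸ discountedSum_polMatrix_sub_le hP0 hP1 πγ πBw πhat hγBw0 hγBw1 (hπγ πBw) s
  have hRHS : ∀ κ B : ℝ, κ * ((γBw - γ) / (1 - γBw)) * B + ε * (1 - γ) / (1 - γBw) =
      ε + (γBw - γ) * (κ / (1 - γBw) * B + ε / (1 - γBw)) := fun κ B => by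
    have : 1 - γBw ≠ 0 := by linarith
    field_simp
    ring
  simp only [Pi.add_apply, Pi.smul_apply, smul_eq_mul, hRHS]
  linarith [mul_le_mul_of_nonneg_left hD (sub_nonneg.2 hγγBw)]

/-- **Planning loss bound.**
`M = (P,R)` and `M̂ = (P̂,R̂)` share state and action spaces. With `π⋆Bw` optimal for `M` at
discount `γBw`, `π⋆γ` optimal for `M` at discount `γ`, `π̂` optimal for `M̂` at discount `γ`,
`ε̂ = ‖V_{M,γ}^{π⋆γ} − V_{M,γ}^{π̂}‖_∞`, `δ = δ_M(π⋆γ, π⋆Bw)`, `δ̂ = δ_M(π⋆γ, π̂)`, and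
`κ` the value-function variation of `M` at discount `γ`, the planning loss satisfies
`‖V_{M,γBw}^{π⋆Bw} − V_{M,γBw}^{π̂}‖_∞ ≤ κ ((γBw−γ)/(1−γBw))
  ((δ/2)/(1−γBw(1−δ/2)) + (δ̂/2)/(1−γBw(1−δ̂/2))) + ε̂ (1−γ)/(1−γBw)`. -/
theorem planning_loss_bound
    {S A : Type*} [Fintype S] [DecidableEq S] [Nonempty S] [Fintype A] [Nonempty A] [DecidableEq A]
    (P Phat : S → A → S → ℝ) (R Rhat : S → A → ℝ) (Rmax Rmaxhat : ℝ)
    (hP0 : ∀ s a s', 0 ≤ P s a s') (hP1 : ∀ s a, ∑ s', P s a s' = 1)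
    (hPhat0 : ∀ s a s', 0 ≤ Phat s a s') (hPhat1 : ∀ s a, ∑ s', Phat s a s' = 1)
    (hRmax : 0 ≤ Rmax) (hR0 : ∀ s a, 0 ≤ R s a) (hR1 : ∀ s a, R s a ≤ Rmax)
    (hRmaxhat : 0 ≤ Rmaxhat) (hRhat0 : ∀ s a, 0 ≤ Rhat s a) (hRhat1 : ∀ s a, Rhat s a ≤ Rmaxhat)
    (γ γBw : ℝ) (hγ0 : 0 ≤ γ) (hγγBw : γ ≤ γBw) (hγBw1 : γBw < 1)
    (πBw πγ πhat : S → A)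
    (hπBw : IsOptimalPolicy P R γBw πBw) (hπγ : IsOptimalPolicy P R γ πγ)
    (hπhat : IsOptimalPolicy Phat Rhat γ πhat) :
    supNorm (fun s => valueVec P R γBw πBw s - valueVec P R γBw πhat s) ≤
      valueVariation (valueVec P R γ πγ) * ((γBw - γ) / (1 - γBw)) *
        ((discordantVar P πγ πBw / 2) / (1 - γBw * (1 - discordantVar P πγ πBw / 2))
          + (discordantVar P πγ πhat / 2) / (1 - γBw * (1 - discordantVar P πγ πhat / 2)))
      + supNorm (fun s => valueVec P R γ πγ s - valueVec P R γ πhat s) * (1 - γ) / (1 - γBw) :=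
  planning_loss_bound_general P R hP0 hP1 γ γBw hγ0 hγγBw hγBw1 πBw πγ πhat hπBw hπγ
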